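/- Let s, t ∈ {0,1}^L be distinct words of the same length L ≥ 1, and suppose there exist a word v with |v| ≤ L and an integer d with 0 ≤ d ≤ 2L − |v| such that for each pair (p,q) ∈ {s,t}×{s,t}, the word v occurs as a subword of pq exactly once, namely starting at position d. Let Y ⊆ {0,1}^ℤ be the set of all z that admit a decomposition as a bi-infinite concatenation of s and t. Then Y is a subshift and the topological entropy of (Y,σ) equals (log 2)/L; in particular it is positive. -/

import Mathlib

/-!
Every point of `Y` is a concatenation `concatMap s t L c b` with offset `0 ≤ c < L` and block
choice `b : ℤ → Bool`, so `Y` is a finite union of continuous images of the compact space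
`Bool^ℤ`, and the shift only moves the offset. For entropy we count at times `L * n`: a window of
`L * n + 2m` coordinates meets at most `n + 2m + 2` blocks, which leaves at most
`L * 2 ^ (n + 2m + 2)` patterns, while the `2 ^ n` concatenations of `n` blocks starting at `0`
are pairwise separated by their first `L * n` symbols because `s ≠ t`. Both counts grow like
`2 ^ n`, i.e. like `exp ((log 2 / L) * (L * n))`.
-/

open MeasureTheory Filter
open scoped ENNReal

/-- The left shift on bi-infinite binary sequences. -/
def shift (x : ℤ → Bool) : ℤ → Bool := fun n => x (n + 1)

/-- A subshift: a nonempty closed shift-invariant subset of `{0,1}^ℤ`. -/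
def IsSubshift (X : Set (ℤ → Bool)) : Prop :=
  X.Nonempty ∧ IsClosed X ∧ shift '' X = X

/-- The one-sided cylinder set `[w]₀⁺` in `X` determined by a word `w`. -/
def cylinder (X : Set (ℤ → Bool)) (w : List Bool) : Set (ℤ → Bool) :=
  {x ∈ X | ∀ j : Fin w.length, x ((j : ℕ) : ℤ) = w.get j}

/-- The language of words of length `n`. -/
def lang (X : Set (ℤ → Bool)) (n : ℕ) : Set (List Bool) :=
  {w | w.length = n ∧ (cylinder X w).Nonempty}

/-- The word complexity function. -/
noncomputable def complexity (X : Set (ℤ → Bool)) (n : ℕ) : ℕ :=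
  (lang X n).ncard

/-- The two-sided orbit of a point under the shift. -/
def orbit (x : ℤ → Bool) : Set (ℤ → Bool) := {y | ∃ k : ℤ, y = fun n => x (n + k)}

/-- A minimal subshift: every orbit is dense. -/
def IsMinimalSubshift (X : Set (ℤ → Bool)) : Prop :=
  IsSubshift X ∧ ∀ x ∈ X, X ⊆ closure (orbit x)

/-- A shift-invariant Borel probability measure supported on `X`. -/
def InvariantProbOn (X : Set (ℤ → Bool)) (μ : Measure (ℤ → Bool)) : Prop :=
  IsProbabilityMeasure μ ∧ μ Xᶜ = 0 ∧ Measure.map shift μ = μ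

/-- Unique ergodicity of a subshift. -/
def UniquelyErgodic (X : Set (ℤ → Bool)) : Prop :=
  ∃! μ : Measure (ℤ → Bool), InvariantProbOn X μ

/-- `v` occurs as a subword of `u` starting at position `i`. -/
def occursAt (v u : List Bool) (i : ℕ) : Prop :=
  i + v.length ≤ u.length ∧ (u.drop i).take v.length = v

/-- `(c, β)` is a decomposition of `z ∈ {0,1}^ℤ` as a bi-infinite concatenation of the
words `s` and `t`, each of length `L`: `0 ≤ c < L`, each `β n ∈ {s,t}`, and
`z (c + nL + r) = (β n) r` for all `n ∈ ℤ`, `0 ≤ r < L`. -/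
def IsDecomp (s t : List Bool) (L : ℕ) (z : ℤ → Bool) (c : ℤ) (β : ℤ → List Bool) :
    Prop :=
  0 ≤ c ∧ c < (L : ℤ) ∧ (∀ n : ℤ, β n = s ∨ β n = t) ∧
    ∀ (n : ℤ) (r : ℕ), r < L → z (c + n * L + r) = (β n).getD r false

open Set Uniformity Dynamics

lemma shift_iterate_apply (k : ℕ) (x : ℤ → Bool) (i : ℤ) : shift^[k] x i = x (i + k) := by
  induction k generalizing x i with
  | zero => simp
  | succ k ih =>
    rw [Function.iterate_succ_apply, ih, shift]
    push_cast
    ring_nf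

def concatShift (s t : List Bool) (L : ℕ) : Set (ℤ → Bool) :=
  {z | ∃ c β, IsDecomp s t L z c β}

/-- The concatenation of the blocks `if b k then s else t`, the `k`-th one starting at
`c + k * L`. -/
def concatMap (s t : List Bool) (L : ℕ) (c : ℤ) (b : ℤ → Bool) : ℤ → Bool :=
  fun i => (if b ((i - c) / L) then s else t).getD ((i - c) % L).toNat false

section concatMap

variable {s t : List Bool} {L : ℕ}

lemma concatMap_apply_add (c : ℤ) (b : ℤ → Bool) (k : ℤ) {r : ℕ} (hr : r < L) :
    concatMap s t L c b (c + k * L + r) = (if b k then s else t).getD r false := by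
  have hr' : (r : ℤ) < L := by exact_mod_cast hr
  have hL : (L : ℤ) ≠ 0 := by omega
  rw [concatMap, show c + k * L + r - c = r + k * L by ring, Int.add_mul_ediv_right _ _ hL,
    Int.add_mul_emod_self_right, Int.ediv_eq_zero_of_lt (by positivity) hr', zero_add,
    Int.emod_eq_of_lt (by positivity) hr', Int.toNat_natCast]

lemma concatMap_congr (c : ℤ) {b b' : ℤ → Bool} (i : ℤ)
    (h : b ((i - c) / L) = b' ((i - c) / L)) :
    concatMap s t L c b i = concatMap s t L c b' i := by
  rw [concatMap, concatMap, h]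

lemma continuous_concatMap (c : ℤ) : Continuous (concatMap s t L c) :=
  continuous_pi fun i => (continuous_of_discreteTopology (f := fun x : Bool =>
    (if x then s else t).getD ((i - c) % L).toNat false)).comp (continuous_apply _)

lemma shift_concatMap (c : ℤ) (b : ℤ → Bool) :
    shift (concatMap s t L c b) = concatMap s t L (c - 1) b := by
  funext i
  simp only [shift, concatMap, show i + 1 - c = i - (c - 1) by ring]

lemma concatMap_emod (c : ℤ) (b : ℤ → Bool) :
    concatMap s t L c b = concatMap s t L (c % L) (fun k => b (k - c / L)) := by
  funext i
  have hi : i - c % L = i - c + L * (c / L) := by rw [Int.emod_def]; ring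
  rcases eq_or_ne (L : ℤ) 0 with hL | hL
  · simp [concatMap, hL]
  simp only [concatMap, hi, Int.add_mul_ediv_left _ _ hL, Int.add_mul_emod_self_left,
    add_sub_cancel_right]

lemma concatMap_mem_concatShift (hL : 1 ≤ L) (c : ℤ) (b : ℤ → Bool) :
    concatMap s t L c b ∈ concatShift s t L := by
  have hL' : (0 : ℤ) < L := by omega
  rw [concatMap_emod]
  refine ⟨c % L, fun k => if b (k - c / L) then s else t, Int.emod_nonneg _ hL'.ne',
    Int.emod_lt_of_pos _ hL', fun k => by dsimp only; split_ifs <;> simp, fun k r hr => ?_⟩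
  exact concatMap_apply_add _ _ k hr

lemma exists_concatMap_eq {z : ℤ → Bool} (hz : z ∈ concatShift s t L) :
    ∃ c : Fin L, ∃ b, concatMap s t L c b = z := by
  obtain ⟨c, β, hc0, hcL, hβ, hz⟩ := hz
  have hL : (0 : ℤ) < L := by omega
  have hblock : ∀ k, (if decide (β k = s) then s else t) = β k := fun k => by
    by_cases h : β k = s
    · simp [h]
    · simp [(hβ k).resolve_left h, eq_comm]
  refine ⟨⟨c.toNat, by omega⟩, fun k => decide (β k = s), funext fun i => ?_⟩
  have hr0 := Int.emod_nonneg (i - c) hL.ne'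
  have hrL := Int.emod_lt_of_pos (i - c) hL
  have hi : i = c + (i - c) / L * L + ((i - c) % L).toNat := by
    rw [Int.toNat_of_nonneg hr0]
    linarith [Int.ediv_mul_add_emod (i - c) L]
  simp only [Int.toNat_of_nonneg hc0]
  rw [hi, concatMap_apply_add _ _ _ (by omega), hz _ _ (by omega), hblock]

lemma concatShift_eq_iUnion (hL : 1 ≤ L) :
    concatShift s t L = ⋃ c : Fin L, range (concatMap s t L c) := by
  ext z
  simp only [mem_iUnion, mem_range]
  exact ⟨exists_concatMap_eq, fun ⟨c, b, hz⟩ => hz ▸ concatMap_mem_concatShift hL _ b⟩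

lemma isCompact_concatShift (hL : 1 ≤ L) : IsCompact (concatShift s t L) := by
  rw [concatShift_eq_iUnion hL]
  exact isCompact_iUnion fun c => isCompact_range (continuous_concatMap _)

lemma isSubshift_concatShift (hL : 1 ≤ L) : IsSubshift (concatShift s t L) := by
  refine ⟨⟨_, concatMap_mem_concatShift hL 0 fun _ => true⟩,
    (isCompact_concatShift hL).isClosed, Subset.antisymm ?_ fun z hz => ?_⟩
  · rintro _ ⟨z, hz, rfl⟩
    obtain ⟨c, b, rfl⟩ := exists_concatMap_eq hz
    rw [shift_concatMap]
    exact concatMap_mem_concatShift hL _ b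
  · obtain ⟨c, b, rfl⟩ := exists_concatMap_eq hz
    refine ⟨_, concatMap_mem_concatShift hL (c + 1) b, ?_⟩
    rw [shift_concatMap, add_sub_cancel_right]

end concatMap

def window (m : ℕ) : SetRel (ℤ → Bool) (ℤ → Bool) :=
  {p | ∀ i : ℤ, |i| ≤ m → p.1 i = p.2 i}

lemma uniformity_hasBasis_window : (𝓤 (ℤ → Bool)).HasBasis (fun _ => True) window := by
  have hcoord :
      𝓤 (ℤ → Bool) = ⨅ i : ℤ, 𝓟 {p : (ℤ → Bool) × (ℤ → Bool) | p.1 i = p.2 i} := by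
    rw [Pi.uniformity]
    congr 1
    funext i
    rw [show 𝓤 Bool = 𝓟 SetRel.id from rfl, comap_principal]
    rfl
  refine ⟨fun U => ⟨fun hU => ?_, fun ⟨m, _, hm⟩ => mem_of_superset ?_ hm⟩⟩
  · rw [hcoord] at hU
    obtain ⟨I, hI, hIU⟩ := (hasBasis_iInf_principal_finite _).mem_iff.1 hU
    obtain ⟨m, hm⟩ := (hI.image fun i => i.natAbs).bddAbove
    exact ⟨m, trivial, fun p hp => hIU <| mem_iInter₂.2 fun i hi =>
      hp i (by have := hm (mem_image_of_mem _ hi); simp only [Int.abs_eq_natAbs]; omega)⟩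
  · rw [hcoord]
    have hfin : (Icc (-(m : ℤ)) m).Finite := finite_Icc _ _
    refine mem_of_superset
      ((biInter_mem hfin).2 fun i _ => mem_iInf_of_mem i (mem_principal_self _))
      fun p hp i hi => mem_iInter₂.1 hp i (mem_Icc.2 (abs_le.1 hi))

lemma eq_of_mem_dynEntourage_window {m n k : ℕ} {x y : ℤ → Bool}
    (h : (x, y) ∈ dynEntourage shift (window m) n) (hk : k < n) : x k = y k := by
  have := (mem_dynEntourage.1 h k hk) 0 (by simp)
  simpa [shift_iterate_apply] using this

lemma mem_dynEntourage_window {m n : ℕ} {x y : ℤ → Bool}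
    (h : ∀ i : ℤ, -(m : ℤ) ≤ i → i < m + n → x i = y i) :
    (x, y) ∈ dynEntourage shift (window m) n := by
  refine mem_dynEntourage.2 fun k hk i hi => ?_
  rw [abs_le] at hi
  simp only [shift_iterate_apply]
  exact h _ (by omega) (by omega)

def extendWord {B : ℕ} (a : ℤ) (w : Fin B → Bool) : ℤ → Bool :=
  fun k => if h : 0 ≤ k - a ∧ (k - a).toNat < B then w ⟨(k - a).toNat, h.2⟩ else true

lemma extendWord_apply {B : ℕ} (a : ℤ) (w : Fin B → Bool) (j : Fin B) :
    extendWord a w (a + j) = w j := by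
  simp [extendWord]

lemma exists_extendWord_eq (a : ℤ) (B : ℕ) (b : ℤ → Bool) :
    ∃ w : Fin B → Bool, ∀ k, a ≤ k → k < a + B → extendWord a w k = b k := by
  refine ⟨fun j => b (a + j), fun k hak hkB => ?_⟩
  rw [extendWord, dif_pos ⟨by omega, by omega⟩]
  simp only
  congr 1
  omega

lemma exists_getD_ne {s t : List Bool} {L : ℕ} (hs : s.length = L) (ht : t.length = L)
    (hst : s ≠ t) : ∃ r < L, s.getD r false ≠ t.getD r false := by
  by_contra! h
  refine hst (List.ext_getElem (hs.trans ht.symm) fun r hrs hrt => ?_)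
  simpa [List.getD_eq_getElem, hrs, hrt] using h r (hs ▸ hrs)

section counting

variable {s t : List Bool} {L : ℕ}

lemma two_pow_le_netMaxcard_concatShift (hs : s.length = L) (ht : t.length = L) (hst : s ≠ t)
    (n : ℕ) :
    (2 ^ n : ℕ∞) ≤ netMaxcard shift (concatShift s t L) (window 0) (L * n) := by
  classical
  obtain ⟨r, hrL, hr⟩ := exists_getD_ne hs ht hst
  let g : (Fin n → Bool) → ℤ → Bool := fun w => concatMap s t L 0 (extendWord 0 w)
  have hsep : ∀ w w', w ≠ w' → ∃ p < L * n, g w p ≠ g w' p := by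
    intro w w' hww
    obtain ⟨j, hj⟩ := Function.ne_iff.1 hww
    have hg : ∀ w : Fin n → Bool,
        g w ((j * L + r : ℕ) : ℤ) = (if w j then s else t).getD r false := by
      intro w
      have hw := extendWord_apply 0 w j
      rw [zero_add] at hw
      show concatMap s t L 0 (extendWord 0 w) _ = _
      rw [← hw, ← concatMap_apply_add 0 _ _ hrL]
      push_cast
      ring_nf
    refine ⟨j * L + r, by nlinarith [j.2], ?_⟩
    rw [hg, hg]
    revert hj hr
    cases w j <;> cases w' j <;> simp [eq_comm]
  have hnet : IsDynNetIn shift (concatShift s t L) (window 0) (L * n)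
      (Finset.univ.image g : Set (ℤ → Bool)) := by
    refine ⟨fun x hx => ?_, fun x hx y hy hxy => disjoint_left.2 fun ζ hxζ hyζ => ?_⟩
    · obtain ⟨w, -, rfl⟩ := by simpa using hx
      exact concatMap_mem_concatShift (by omega) _ _
    · obtain ⟨w, -, rfl⟩ := by simpa using hx
      obtain ⟨w', -, rfl⟩ := by simpa using hy
      obtain ⟨p, hp, hne⟩ := hsep w w' fun h => hxy (h ▸ rfl)
      exact hne ((eq_of_mem_dynEntourage_window hxζ hp).trans
        (eq_of_mem_dynEntourage_window hyζ hp).symm)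
  have hinj : Function.Injective g := fun w w' h => by
    by_contra hww
    obtain ⟨p, -, hne⟩ := hsep w w' hww
    exact hne (congrFun h p)
  calc (2 ^ n : ℕ∞) = (Finset.univ.image g).card := by
        rw [Finset.card_image_of_injective _ hinj]
        simp
    _ ≤ _ := hnet.card_le_netMaxcard

lemma coverMincard_concatShift_le (hL : 1 ≤ L) (m n : ℕ) :
    coverMincard shift (concatShift s t L) (window m) (L * n) ≤ L * 2 ^ (n + 2 * m + 2) := by
  classical
  have hL' : (0 : ℤ) < L := by omega
  let B := n + 2 * m + 2
  let a : ℤ := -(m + 1)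
  let g : Fin L × (Fin B → Bool) → ℤ → Bool := fun p =>
    concatMap s t L p.1 (extendWord a p.2)
  have hcover : IsDynCoverOf shift (concatShift s t L) (window m) (L * n)
      (Finset.univ.image g : Set (ℤ → Bool)) := by
    intro z hz
    obtain ⟨c, b, rfl⟩ := exists_concatMap_eq hz
    obtain ⟨w, hw⟩ := exists_extendWord_eq a B b
    refine ⟨g (c, w), by simp, mem_dynEntourage_window fun i hi₁ hi₂ => ?_⟩
    have hmL : (m : ℤ) ≤ m * L := by nlinarith
    have hc := c.2
    -- the window `[-m, m + L n)` meets only the blocks `a, …, a + B - 1`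
    refine concatMap_congr _ i (hw _ ?_ ?_).symm
    · rw [Int.le_ediv_iff_mul_le hL']
      simp only [a]
      nlinarith
    · rw [Int.ediv_lt_iff_lt_mul hL']
      simp only [a, B]
      push_cast at hi₂ ⊢
      nlinarith
  calc coverMincard shift (concatShift s t L) (window m) (L * n)
      ≤ (Finset.univ.image g).card := hcover.coverMincard_le_card
    _ ≤ (Finset.univ : Finset (Fin L × (Fin B → Bool))).card := by
        exact_mod_cast Finset.card_image_le
    _ = L * 2 ^ B := by simp

end counting

section entropy

variable {s t : List Bool} {L : ℕ}

open ExpGrowth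

lemma coe_log_two_div_natCast (L : ℕ) :
    ((Real.log 2 / L : ℝ) : EReal) = ENNReal.log 2 / L := by
  rw [EReal.coe_div, ← ENNReal.ofReal_ofNat 2, ENNReal.log_ofReal_of_pos two_pos]
  rfl

lemma log_two_div_le_netEntropyEntourage_concatShift (hs : s.length = L) (ht : t.length = L)
    (hst : s ≠ t) :
    ((Real.log 2 / L : ℝ) : EReal) ≤
      netEntropyEntourage shift (concatShift s t L) (window 0) := by
  have hL : L ≠ 0 := by obtain ⟨r, hr, -⟩ := exists_getD_ne hs ht hst; omega
  have hmono : Monotone fun n => (netMaxcard shift (concatShift s t L) (window 0) n : ℝ≥0∞) :=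
    fun _ _ h => ENat.toENNReal_mono (netMaxcard_monotone_time _ _ _ h)
  rw [coe_log_two_div_natCast,
    EReal.div_le_iff_le_mul (by exact_mod_cast Nat.pos_of_ne_zero hL) (EReal.natCast_ne_top L),
    netEntropyEntourage, ← hmono.expGrowthSup_comp_mul hL, ← expGrowthSup_pow]
  refine expGrowthSup_monotone fun n => ?_
  simpa using ENat.toENNReal_mono (two_pow_le_netMaxcard_concatShift hs ht hst n)

lemma coverEntropyEntourage_concatShift_window_le (hL : 1 ≤ L) (m : ℕ) :
    coverEntropyEntourage shift (concatShift s t L) (window m) ≤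
      ((Real.log 2 / L : ℝ) : EReal) := by
  have hmono : Monotone fun n => (coverMincard shift (concatShift s t L) (window m) n : ℝ≥0∞) :=
    fun _ _ h => ENat.toENNReal_mono (coverMincard_monotone_time _ _ _ h)
  rw [coe_log_two_div_natCast,
    EReal.le_div_iff_mul_le (by exact_mod_cast hL) (EReal.natCast_ne_top L), mul_comm,
    coverEntropyEntourage, ← hmono.expGrowthSup_comp_mul (by omega), ← expGrowthSup_pow]
  refine expGrowthSup_le_of_eventually_le (b := L * 2 ^ (2 * m + 2))
    (by simp [ENNReal.mul_eq_top]) (Eventually.of_forall fun n => ?_)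
  calc (coverMincard shift (concatShift s t L) (window m) (L * n) : ℝ≥0∞)
      ≤ ((L * 2 ^ (n + 2 * m + 2) : ℕ∞) : ℝ≥0∞) :=
        ENat.toENNReal_mono (coverMincard_concatShift_le hL m n)
    _ = L * 2 ^ (2 * m + 2) * 2 ^ n := by push_cast; ring

lemma coverEntropy_concatShift (hs : s.length = L) (ht : t.length = L) (hst : s ≠ t) :
    coverEntropy shift (concatShift s t L) = ((Real.log 2 / L : ℝ) : EReal) := by
  have hL : 1 ≤ L := by obtain ⟨r, hr, -⟩ := exists_getD_ne hs ht hst; omega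
  refine le_antisymm ?_ ((log_two_div_le_netEntropyEntourage_concatShift hs ht hst).trans
    (netEntropyEntourage_le_coverEntropy _ _ (uniformity_hasBasis_window.mem_of_mem trivial)))
  rw [coverEntropy_eq_iSup_basis uniformity_hasBasis_window]
  exact iSup₂_le fun m _ => coverEntropyEntourage_concatShift_window_le hL m

end entropy

theorem concatenation_shift_entropy_general
    (L : ℕ) (hL : 1 ≤ L) (s t : List Bool)
    (hs : s.length = L) (ht : t.length = L) (hst : s ≠ t) :
    IsSubshift {z | ∃ c β, IsDecomp s t L z c β} ∧
    Dynamics.coverEntropy shift {z | ∃ c β, IsDecomp s t L z c β} =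
      ((Real.log 2 / L : ℝ) : EReal) ∧
    0 < Dynamics.coverEntropy shift {z | ∃ c β, IsDecomp s t L z c β} := by
  rw [show {z | ∃ c β, IsDecomp s t L z c β} = concatShift s t L from rfl]
  have hent := coverEntropy_concatShift hs ht hst
  refine ⟨isSubshift_concatShift hL, hent, ?_⟩
  rw [hent, EReal.coe_pos]
  exact div_pos (Real.log_pos one_lt_two) (by exact_mod_cast hL)

/-- Under the unique-decipherability hypotheses on `s` and `t`, the set `Y` of all
bi-infinite concatenations of `s` and `t` is a subshift whose topological entropy is
`(log 2)/L`; in particular it is positive. -/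
theorem concatenation_shift_entropy
    (L : ℕ) (hL : 1 ≤ L) (s t : List Bool)
    (hs : s.length = L) (ht : t.length = L) (hst : s ≠ t)
    (v : List Bool) (d : ℕ) (hv : v.length ≤ L) (hd : d + v.length ≤ 2 * L)
    (hocc : ∀ p q : List Bool, (p = s ∨ p = t) → (q = s ∨ q = t) →
      occursAt v (p ++ q) d ∧ ∀ i : ℕ, occursAt v (p ++ q) i → i = d) :
    IsSubshift {z | ∃ c β, IsDecomp s t L z c β} ∧
    Dynamics.coverEntropy shift {z | ∃ c β, IsDecomp s t L z c β} =
      ((Real.log 2 / L : ℝ) : EReal) ∧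
    0 < Dynamics.coverEntropy shift {z | ∃ c β, IsDecomp s t L z c β} :=
  concatenation_shift_entropy_general L hL s t hs ht hst
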